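/- arXiv:2504.06238 — 2 statements merged into one kernel-verified Lean document; each statement's English description precedes it below -/
import Mathlib

section
/- Let ξ ∈ W^{2,∞}(𝒪;ℝ²) be divergence-free and tangent to ∂𝒪, and let B f := ℒ_ξ f + 𝒯_ξ f with adjoint B* = −ℒ_ξ + 𝒯_ξ* (densely defined on W^{1,2}). Then there exists a constant c such that for all f ∈ W^{1,2}(𝒪;ℝ²): (i) ⟨B f, B* f⟩ + ‖B f‖²_{L²} ≤ c ‖ξ‖²_{W^{2,∞}} ‖f‖²_{L²}, and (ii) ⟨B f, f⟩² ≤ c ‖ξ‖²_{W^{1,∞}} ‖f‖⁴_{L²}. -/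
/-!
The only first-order terms in `f` appear through derivatives along `ξ` of scalar functions,
`Dψ(ξ)`, whose integrals over `O` vanish because `ξ` is orthogonal to gradients. For (ii),
`⟨ℒf, f⟩ = ½ D|f|²(ξ)`. For (i), `B f + B* f = 𝒯f + 𝒯*f` and the adjoint of `𝒯` turns
`⟨ℒf, 𝒯f⟩` into `⟨f, Dξ ℒf⟩`, so that
`⟨Bf, B*f⟩ + |Bf|² = D⟨f, Dξ f⟩(ξ) + ⟨𝒯f, 𝒯f + Dξ f⟩ - ⟨f, D²ξ(ξ) f⟩`.
What remains is of order zero in `f` and is bounded pointwise by the sup norms of `ξ`, `Dξ`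
and `D²ξ` on the closure of `O`.
-/

open MeasureTheory Real Set Filter Topology
open scoped ENNReal

noncomputable section

abbrev E2 := EuclideanSpace ℝ (Fin 2)

/-- The transport term `ℒ_ξ f = (ξ·∇)f`. -/
def Ltrans (ξ f : E2 → E2) : E2 → E2 := fun x => fderiv ℝ f x (ξ x)

/-- The stretching operator `𝒯_ξ f = Σ_j f^j ∇ξ^j = (Dξ(x))* f(x)`. -/
def Tstretch (ξ f : E2 → E2) : E2 → E2 :=
  fun x => ContinuousLinearMap.adjoint (fderiv ℝ ξ x) (f x)

/-- The transport-stretching operator `B f = ℒ_ξ f + 𝒯_ξ f`. -/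
def Bop (ξ f : E2 → E2) : E2 → E2 := fun x => Ltrans ξ f x + Tstretch ξ f x

/-- The adjoint `B* f = −ℒ_ξ f + 𝒯_ξ* f`, where `𝒯_ξ* f(x) = Dξ(x) f(x)`. -/
def Bstar (ξ f : E2 → E2) : E2 → E2 := fun x => -Ltrans ξ f x + fderiv ℝ ξ x (f x)

/-- The `W^{1,∞}(𝒪;ℝ²)` norm. -/
def W1infNorm (O : Set E2) (h : E2 → E2) : ℝ :=
  ⨆ x : closure O, (‖h (x : E2)‖ ⊔ ‖fderiv ℝ h (x : E2)‖)

/-- The `W^{2,∞}(𝒪;ℝ²)` norm. -/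
def W2infNorm (O : Set E2) (h : E2 → E2) : ℝ :=
  ⨆ x : closure O, (‖h (x : E2)‖ ⊔ ‖fderiv ℝ h (x : E2)‖ ⊔ ‖iteratedFDeriv ℝ 2 h (x : E2)‖)

open scoped RealInnerProductSpace
open ContinuousLinearMap (adjoint)

section InnerProduct

variable {E F : Type*} [NormedAddCommGroup E] [NormedSpace ℝ E]
  [NormedAddCommGroup F] [InnerProductSpace ℝ F]

theorem fderiv_norm_sq_comp_apply {f : E → F} {x : E} (hf : DifferentiableAt ℝ f x) (v : E) :
    fderiv ℝ (fun y => ‖f y‖ ^ 2) x v = 2 * ⟪fderiv ℝ f x v, f x⟫ := by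
  rw [hf.hasFDerivAt.norm_sq.fderiv]
  simp [real_inner_comm]

theorem fderiv_inner_clm_apply_apply {f : E → F} {T : E → F →L[ℝ] F} {x : E}
    (hf : DifferentiableAt ℝ f x) (hT : DifferentiableAt ℝ T x) (v : E) :
    fderiv ℝ (fun y => ⟪f y, T y (f y)⟫) x v =
      ⟪fderiv ℝ f x v, T x (f x)⟫ + ⟪f x, T x (fderiv ℝ f x v)⟫
        + ⟪f x, fderiv ℝ T x v (f x)⟫ := by
  rw [(hf.hasFDerivAt.inner ℝ (hT.hasFDerivAt.clm_apply hf.hasFDerivAt)).fderiv]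
  simp only [ContinuousLinearMap.comp_apply, ContinuousLinearMap.prod_apply,
    fderivInnerCLM_apply, add_apply, ContinuousLinearMap.flip_apply,
    inner_add_right]
  ring

theorem norm_fderiv_fderiv (g : E → F) (x : E) :
    ‖fderiv ℝ (fderiv ℝ g) x‖ = ‖iteratedFDeriv ℝ 2 g x‖ := by
  rw [← norm_iteratedFDeriv_zero (𝕜 := ℝ) (f := fderiv ℝ (fderiv ℝ g)),
    norm_iteratedFDeriv_fderiv, norm_iteratedFDeriv_fderiv]

theorem abs_inner_self_apply_le (S : F →L[ℝ] F) (v : F) : |⟪v, S v⟫| ≤ ‖S‖ * ‖v‖ ^ 2 :=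
  calc |⟪v, S v⟫| ≤ ‖v‖ * ‖S v‖ := abs_real_inner_le_norm _ _
    _ ≤ ‖v‖ * (‖S‖ * ‖v‖) := by gcongr; exact S.le_opNorm v
    _ = ‖S‖ * ‖v‖ ^ 2 := by ring

theorem inner_adjoint_apply_add_apply_sub_le [CompleteSpace F] {A S : F →L[ℝ] F} {M : ℝ}
    (hA : ‖A‖ ≤ M) (hS : ‖S‖ ≤ M ^ 2) (v : F) :
    ⟪adjoint A v, adjoint A v + A v⟫ - ⟪v, S v⟫ ≤ 3 * M ^ 2 * ‖v‖ ^ 2 := by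
  have hAv : ‖A v‖ ≤ M * ‖v‖ := (A.le_opNorm v).trans (by gcongr)
  have hA'v : ‖adjoint A v‖ ≤ M * ‖v‖ :=
    ((adjoint A).le_opNorm v).trans (by rw [LinearIsometryEquiv.norm_map]; gcongr)
  calc ⟪adjoint A v, adjoint A v + A v⟫ - ⟪v, S v⟫
      ≤ ‖adjoint A v‖ * (‖adjoint A v‖ + ‖A v‖) + ‖S‖ * ‖v‖ ^ 2 := by
        rw [sub_eq_add_neg]
        exact add_le_add ((real_inner_le_norm _ _).trans (by gcongr; exact norm_add_le _ _))
          ((neg_le_abs _).trans (abs_inner_self_apply_le S v))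
    _ ≤ M * ‖v‖ * (M * ‖v‖ + M * ‖v‖) + M ^ 2 * ‖v‖ ^ 2 := by
        have : 0 ≤ M * ‖v‖ := (norm_nonneg _).trans hAv
        gcongr
    _ = 3 * M ^ 2 * ‖v‖ ^ 2 := by ring

end InnerProduct

section BoundedDomain

variable {X : Type*}

theorem ae_restrict_mem_closure [TopologicalSpace X] [MeasurableSpace X] [OpensMeasurableSpace X]
    (μ : Measure X) (O : Set X) : ∀ᵐ x ∂μ.restrict O, x ∈ closure O :=
  ae_restrict_of_ae_restrict_of_subset subset_closure
    (ae_restrict_mem isClosed_closure.measurableSet)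

variable [MetricSpace X] [ProperSpace X] {O : Set X}

theorem le_iSup_closure_of_continuous (hO : Bornology.IsBounded O) {g : X → ℝ}
    (hg : Continuous g) {x : X} (hx : x ∈ closure O) : g x ≤ ⨆ y : closure O, g y :=
  have hbdd : BddAbove (Set.range fun y : closure O => g y) := by
    simpa only [Set.image_eq_range] using hO.isCompact_closure.bddAbove_image hg.continuousOn
  le_ciSup hbdd ⟨x, hx⟩

variable [MeasurableSpace X] [OpensMeasurableSpace X]

theorem Continuous.integrableOn_of_isBounded {G : Type*} [NormedAddCommGroup G] {μ : Measure X}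
    [IsFiniteMeasureOnCompacts μ] {g : X → G} (hg : Continuous g) (hO : Bornology.IsBounded O) :
    IntegrableOn g O μ :=
  (hg.continuousOn.integrableOn_compact hO.isCompact_closure).mono_set subset_closure

end BoundedDomain

section SobolevNorms

variable {O : Set E2} {ξ : E2 → E2} {x : E2}

theorem norm_fderiv_le_W1infNorm (hO : Bornology.IsBounded O) (hξ : ContDiff ℝ 1 ξ)
    (hx : x ∈ closure O) : ‖fderiv ℝ ξ x‖ ≤ W1infNorm O ξ :=
  le_sup_right.trans <| le_iSup_closure_of_continuous hO (g := fun y => ‖ξ y‖ ⊔ ‖fderiv ℝ ξ y‖)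
    (hξ.continuous.norm.max (hξ.continuous_fderiv one_ne_zero).norm) hx

theorem le_W2infNorm (hO : Bornology.IsBounded O) (hξ : ContDiff ℝ 2 ξ) (hx : x ∈ closure O) :
    ‖ξ x‖ ≤ W2infNorm O ξ ∧ ‖fderiv ℝ ξ x‖ ≤ W2infNorm O ξ ∧
      ‖fderiv ℝ (fderiv ℝ ξ) x‖ ≤ W2infNorm O ξ := by
  have h := le_iSup_closure_of_continuous hO
    (g := fun y => ‖ξ y‖ ⊔ ‖fderiv ℝ ξ y‖ ⊔ ‖iteratedFDeriv ℝ 2 ξ y‖)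
    ((hξ.continuous.norm.max (hξ.continuous_fderiv two_ne_zero).norm).max
      (hξ.continuous_iteratedFDeriv le_rfl).norm) hx
  simp only [sup_le_iff] at h
  exact ⟨h.1.1, h.1.2, norm_fderiv_fderiv ξ x ▸ h.2⟩

end SobolevNorms

/-- The weak form of `div ξ = 0` in `O` together with `ξ · n = 0` on `∂O`. -/
def OrthogonalToGradients (O : Set E2) (ξ : E2 → E2) : Prop :=
  ∀ ψ : E2 → ℝ, ContDiff ℝ 1 ψ → ∫ x in O, fderiv ℝ ψ x (ξ x) = 0

section Cancellation

variable {O : Set E2} {ξ f : E2 → E2}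

theorem continuous_Ltrans (hξ : Continuous ξ) (hf : ContDiff ℝ 1 f) : Continuous (Ltrans ξ f) :=
  (hf.continuous_fderiv one_ne_zero).clm_apply hξ

theorem continuous_Tstretch (hξ : ContDiff ℝ 1 ξ) (hf : Continuous f) :
    Continuous (Tstretch ξ f) :=
  ((adjoint : (E2 →L[ℝ] E2) ≃ₗᵢ⋆[ℝ] _).continuous.comp
    (hξ.continuous_fderiv one_ne_zero)).clm_apply hf

theorem continuous_Bop (hξ : ContDiff ℝ 1 ξ) (hf : ContDiff ℝ 1 f) : Continuous (Bop ξ f) :=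
  (continuous_Ltrans hξ.continuous hf).add (continuous_Tstretch hξ hf.continuous)

theorem continuous_Bstar (hξ : ContDiff ℝ 1 ξ) (hf : ContDiff ℝ 1 f) : Continuous (Bstar ξ f) :=
  (continuous_Ltrans hξ.continuous hf).neg.add
    ((hξ.continuous_fderiv one_ne_zero).clm_apply hf.continuous)

theorem integral_inner_Ltrans_self_eq_zero (hσ : OrthogonalToGradients O ξ)
    (hf : ContDiff ℝ 1 f) : ∫ x in O, ⟪Ltrans ξ f x, f x⟫ = 0 := by
  have h := hσ _ (hf.norm_sq ℝ)
  simp only [fderiv_norm_sq_comp_apply (hf.differentiable one_ne_zero _), integral_const_mul] at h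
  simpa [Ltrans] using h

theorem inner_Bop_self (x : E2) :
    ⟪Bop ξ f x, f x⟫ = ⟪Ltrans ξ f x, f x⟫ + ⟪f x, fderiv ℝ ξ x (f x)⟫ := by
  rw [Bop, inner_add_left, Tstretch, ContinuousLinearMap.adjoint_inner_left]

theorem sq_integral_inner_Bop_self_le (hO : Bornology.IsBounded O) (hξ : ContDiff ℝ 1 ξ)
    (hσ : OrthogonalToGradients O ξ) (hf : ContDiff ℝ 1 f) :
    (∫ x in O, ⟪Bop ξ f x, f x⟫) ^ 2 ≤ W1infNorm O ξ ^ 2 * (∫ x in O, ‖f x‖ ^ 2) ^ 2 := by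
  have hL := continuous_Ltrans hξ.continuous hf
  have hT := hξ.continuous_fderiv one_ne_zero
  have hsplit : ∫ x in O, ⟪Bop ξ f x, f x⟫ = ∫ x in O, ⟪f x, fderiv ℝ ξ x (f x)⟫ := by
    simp_rw [inner_Bop_self]
    rw [integral_add (Continuous.integrableOn_of_isBounded (by fun_prop) hO)
      (Continuous.integrableOn_of_isBounded (by fun_prop) hO),
      integral_inner_Ltrans_self_eq_zero hσ hf, zero_add]
  have hbound : |∫ x in O, ⟪f x, fderiv ℝ ξ x (f x)⟫| ≤ W1infNorm O ξ * ∫ x in O, ‖f x‖ ^ 2 := by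
    rw [← integral_const_mul, ← Real.norm_eq_abs]
    refine norm_integral_le_of_norm_le (Continuous.integrableOn_of_isBounded (by fun_prop) hO) ?_
    filter_upwards [ae_restrict_mem_closure volume O] with x hx
    exact (abs_inner_self_apply_le _ _).trans (by gcongr; exact norm_fderiv_le_W1infNorm hO hξ hx)
  rw [hsplit, ← mul_pow, ← sq_abs]
  exact pow_le_pow_left₀ (abs_nonneg _) hbound 2

theorem inner_Bop_Bstar_add_norm_sq (hξ : Differentiable ℝ (fderiv ℝ ξ))
    (hf : Differentiable ℝ f) (x : E2) :
    ⟪Bop ξ f x, Bstar ξ f x⟫ + ‖Bop ξ f x‖ ^ 2 =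
      fderiv ℝ (fun y => ⟪f y, fderiv ℝ ξ y (f y)⟫) x (ξ x)
        + (⟪Tstretch ξ f x, Tstretch ξ f x + fderiv ℝ ξ x (f x)⟫
          - ⟪f x, fderiv ℝ (fderiv ℝ ξ) x (ξ x) (f x)⟫) := by
  have hsum : Bstar ξ f x + Bop ξ f x = Tstretch ξ f x + fderiv ℝ ξ x (f x) := by
    simp only [Bop, Bstar]; abel
  have hadj : ⟪Ltrans ξ f x, Tstretch ξ f x⟫ = ⟪f x, fderiv ℝ ξ x (Ltrans ξ f x)⟫ := by
    rw [real_inner_comm, Tstretch, ContinuousLinearMap.adjoint_inner_left]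
  rw [← real_inner_self_eq_norm_sq, ← inner_add_right, hsum,
    fderiv_inner_clm_apply_apply (hf x) (hξ x), Bop, inner_add_left, inner_add_right, hadj]
  simp only [Ltrans]
  ring

theorem integral_inner_Bop_Bstar_add_norm_sq_le (hO : Bornology.IsBounded O)
    (hξ : ContDiff ℝ 2 ξ) (hσ : OrthogonalToGradients O ξ) (hf : ContDiff ℝ 1 f) :
    (∫ x in O, ⟪Bop ξ f x, Bstar ξ f x⟫) + ∫ x in O, ‖Bop ξ f x‖ ^ 2 ≤
      3 * W2infNorm O ξ ^ 2 * ∫ x in O, ‖f x‖ ^ 2 := by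
  have hξ1 : ContDiff ℝ 1 ξ := hξ.of_le one_le_two
  have hT : ContDiff ℝ 1 (fderiv ℝ ξ) := hξ.fderiv_right le_rfl
  have hψ : ContDiff ℝ 1 fun y => ⟪f y, fderiv ℝ ξ y (f y)⟫ := hf.inner ℝ (hT.clm_apply hf)
  set R : E2 → ℝ := fun x => ⟪Tstretch ξ f x, Tstretch ξ f x + fderiv ℝ ξ x (f x)⟫
    - ⟪f x, fderiv ℝ (fderiv ℝ ξ) x (ξ x) (f x)⟫
  have hRc : Continuous R := by
    have := continuous_Tstretch hξ1 hf.continuous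
    have := hT.continuous_fderiv one_ne_zero
    fun_prop
  have hBc := continuous_Bop hξ1 hf
  have hBsc := continuous_Bstar hξ1 hf
  calc (∫ x in O, ⟪Bop ξ f x, Bstar ξ f x⟫) + ∫ x in O, ‖Bop ξ f x‖ ^ 2
      = ∫ x in O, (fderiv ℝ (fun y => ⟪f y, fderiv ℝ ξ y (f y)⟫) x (ξ x) + R x) := by
        rw [← integral_add (Continuous.integrableOn_of_isBounded (by fun_prop) hO)
          (Continuous.integrableOn_of_isBounded (by fun_prop) hO)]
        congr 1 with x
        exact inner_Bop_Bstar_add_norm_sq (hT.differentiable one_ne_zero)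
          (hf.differentiable one_ne_zero) x
    _ = ∫ x in O, R x := by
        rw [integral_add (Continuous.integrableOn_of_isBounded
          ((hψ.continuous_fderiv one_ne_zero).clm_apply hξ.continuous) hO)
          (hRc.integrableOn_of_isBounded hO), hσ _ hψ, zero_add]
    _ ≤ ∫ x in O, 3 * W2infNorm O ξ ^ 2 * ‖f x‖ ^ 2 := by
        refine integral_mono_ae (hRc.integrableOn_of_isBounded hO)
          (Continuous.integrableOn_of_isBounded (by fun_prop) hO) ?_
        filter_upwards [ae_restrict_mem_closure volume O] with x hx
        obtain ⟨hξx, hTx, hDTx⟩ := le_W2infNorm hO hξ hx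
        refine inner_adjoint_apply_add_apply_sub_le hTx ?_ (f x)
        calc ‖fderiv ℝ (fderiv ℝ ξ) x (ξ x)‖ ≤ ‖fderiv ℝ (fderiv ℝ ξ) x‖ * ‖ξ x‖ :=
              ContinuousLinearMap.le_opNorm _ _
          _ ≤ W2infNorm O ξ ^ 2 := by
              rw [sq]; exact mul_le_mul hDTx hξx (norm_nonneg _) ((norm_nonneg _).trans hξx)
    _ = 3 * W2infNorm O ξ ^ 2 * ∫ x in O, ‖f x‖ ^ 2 := integral_const_mul _ _

end Cancellation

theorem noise_cancellation_estimates_general (O : Set E2)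
    (hOb : Bornology.IsBounded O) (ξ : E2 → E2) (hξ : ContDiff ℝ 2 ξ)
    (hσ : ∀ ψ : E2 → ℝ, ContDiff ℝ 1 ψ → (∫ x in O, fderiv ℝ ψ x (ξ x)) = 0) :
    ∃ c > 0, ∀ f : E2 → E2, ContDiff ℝ 1 f →
      ((∫ x in O, (inner ℝ (Bop ξ f x) (Bstar ξ f x) : ℝ)) + ∫ x in O, ‖Bop ξ f x‖ ^ 2 ≤
        c * W2infNorm O ξ ^ 2 * ∫ x in O, ‖f x‖ ^ 2) ∧
      (∫ x in O, (inner ℝ (Bop ξ f x) (f x) : ℝ)) ^ 2 ≤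
        c * W1infNorm O ξ ^ 2 * (∫ x in O, ‖f x‖ ^ 2) ^ 2 := by
  refine ⟨3, by norm_num, fun f hf => ⟨integral_inner_Bop_Bstar_add_norm_sq_le hOb hξ hσ hf, ?_⟩⟩
  calc (∫ x in O, ⟪Bop ξ f x, f x⟫) ^ 2
      ≤ W1infNorm O ξ ^ 2 * (∫ x in O, ‖f x‖ ^ 2) ^ 2 :=
        sq_integral_inner_Bop_self_le hOb (hξ.of_le one_le_two) hσ hf
    _ ≤ 3 * W1infNorm O ξ ^ 2 * (∫ x in O, ‖f x‖ ^ 2) ^ 2 := by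
        rw [mul_assoc]; exact le_mul_of_one_le_left (by positivity) (by norm_num)

/-- The key cancellation estimates for the transport-stretching noise operator:
(i) `⟨Bf, B*f⟩ + ‖Bf‖² ≤ c‖ξ‖²_{W^{2,∞}}‖f‖²_{L²}` and
(ii) `⟨Bf, f⟩² ≤ c‖ξ‖²_{W^{1,∞}}‖f‖⁴_{L²}`, for `ξ ∈ W^{2,∞}` divergence-free and
tangent to the boundary (encoded weakly by orthogonality to gradients). -/
theorem noise_cancellation_estimates (O : Set E2) (hO : IsOpen O)
    (hOb : Bornology.IsBounded O) (ξ : E2 → E2) (hξ : ContDiff ℝ 2 ξ)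
    (hσ : ∀ ψ : E2 → ℝ, ContDiff ℝ 1 ψ → (∫ x in O, fderiv ℝ ψ x (ξ x)) = 0) :
    ∃ c > 0, ∀ f : E2 → E2, ContDiff ℝ 1 f →
      ((∫ x in O, (inner ℝ (Bop ξ f x) (Bstar ξ f x) : ℝ)) + ∫ x in O, ‖Bop ξ f x‖ ^ 2 ≤
        c * W2infNorm O ξ ^ 2 * ∫ x in O, ‖f x‖ ^ 2) ∧
      (∫ x in O, (inner ℝ (Bop ξ f x) (f x) : ℝ)) ^ 2 ≤
        c * W1infNorm O ξ ^ 2 * (∫ x in O, ‖f x‖ ^ 2) ^ 2 :=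
  noise_cancellation_estimates_general O hOb ξ hξ hσ
end
end

section
/- Let (X_n) be a sequence of random variables with values in a Polish space 𝒴 (with its Borel σ-algebra). Then (X_n) converges in probability to some 𝒴-valued random variable X if and only if for every pair of subsequences (X_{l_k}) and (X_{m_k}), the sequence of pairs (X_{l_k}, X_{m_k}) admits a further subsequence converging in law in 𝒴 × 𝒴 to a random variable supported on the diagonal {(y,y) : y ∈ 𝒴}. -/
open MeasureTheory Filter Topology

/-!
If `X n → Z` in probability, then every pair `(X (l k), X (m k))` tends to `(Z, Z)` in
probability, hence in law, and the law of `(Z, Z)` lives on the diagonal.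

Conversely, for a limit law `ν` carried by the diagonal, the closed sets `{ε ≤ dist y z}` are
`ν`-null, so by the portmanteau theorem `dist (X (l (φ k))) (X (m (φ k))) → 0` in probability.
Since this holds for every pair of subsequences, `(X n)` is Cauchy in probability. A subsequence
that is Cauchy at a geometric rate converges almost surely by Borel–Cantelli, and its limit is
the limit in probability of the whole sequence.
-/

namespace MeasureTheory

variable {α E : Type*} {mα : MeasurableSpace α} {μ : Measure α}

theorem TendstoInMeasure.prodMk {ι F : Type*} [PseudoMetricSpace E] [PseudoMetricSpace F]
    {l : Filter ι} {f : ι → α → E} {g : ι → α → F} {f₀ : α → E} {g₀ : α → F}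
    (hf : TendstoInMeasure μ f l f₀) (hg : TendstoInMeasure μ g l g₀) :
    TendstoInMeasure μ (fun i x => (f i x, g i x)) l (fun x => (f₀ x, g₀ x)) := by
  rw [tendstoInMeasure_iff_dist] at hf hg ⊢
  intro ε hε
  have hsum := (hf ε hε).add (hg ε hε)
  rw [add_zero] at hsum
  refine tendsto_of_tendsto_of_tendsto_of_le_of_le tendsto_const_nhds hsum (fun _ => zero_le)
    fun i => (measure_mono fun x hx => ?_).trans (measure_union_le _ _)
  simpa only [Set.mem_ofPred_eq, Set.mem_union, Prod.dist_eq, le_max_iff] using hx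

theorem TendstoInDistribution.tendsto_integral {ι Ω' : Type*} [TopologicalSpace E]
    [MeasurableSpace E] [OpensMeasurableSpace E] [MeasurableSpace Ω'] {μ' : Measure Ω'}
    [IsProbabilityMeasure μ']
    [IsProbabilityMeasure μ] {l : Filter ι} {X : ι → α → E} {Z : Ω' → E}
    (h : TendstoInDistribution X l Z (fun _ => μ) μ') (g : BoundedContinuousFunction E ℝ) :
    Tendsto (fun i => ∫ x, g (X i x) ∂μ) l (𝓝 (∫ ω, g (Z ω) ∂μ')) := by
  have := ProbabilityMeasure.tendsto_iff_forall_integral_tendsto.mp h.tendsto g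
  simp only [ProbabilityMeasure.coe_mk] at this
  rw [integral_map h.aemeasurable_limit g.continuous.aestronglyMeasurable] at this
  exact this.congr fun i =>
    integral_map (h.forall_aemeasurable i) g.continuous.aestronglyMeasurable

theorem tendsto_measure_preimage_of_tendsto_integral {ι : Type*} [TopologicalSpace E]
    [MeasurableSpace E] [OpensMeasurableSpace E] [HasOuterApproxClosed E]
    [IsProbabilityMeasure μ] {l : Filter ι} {W : ι → α → E} (hW : ∀ i, AEMeasurable (W i) μ)
    {ν : Measure E} [IsProbabilityMeasure ν]
    (h : ∀ g : BoundedContinuousFunction E ℝ,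
      Tendsto (fun i => ∫ x, g (W i x) ∂μ) l (𝓝 (∫ y, g y ∂ν)))
    {F : Set E} (hF : IsClosed F) (hνF : ν F = 0) :
    Tendsto (fun i => μ (W i ⁻¹' F)) l (𝓝 0) := by
  let laws : ι → ProbabilityMeasure E := fun i =>
    ⟨μ.map (W i), Measure.isProbabilityMeasure_map (hW i)⟩
  have hlaws : Tendsto laws l (𝓝 ⟨ν, inferInstance⟩) :=
    ProbabilityMeasure.tendsto_iff_forall_integral_tendsto.mpr fun g =>
      (h g).congr fun i => (integral_map (hW i) g.continuous.aestronglyMeasurable).symm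
  have hlimsup := ProbabilityMeasure.limsup_measure_closed_le_of_tendsto hlaws hF
  simp only [laws, ProbabilityMeasure.coe_mk,
    Measure.map_apply_of_aemeasurable (hW _) hF.measurableSet, hνF] at hlimsup
  exact tendsto_of_le_liminf_of_limsup_le zero_le hlimsup

section CauchyInMeasure

variable [PseudoMetricSpace E]

def CauchyInMeasure (μ : Measure α) (f : ℕ → α → E) : Prop :=
  ∀ ε > 0, Tendsto (fun p : ℕ × ℕ => μ {x | ε ≤ dist (f p.1 x) (f p.2 x)}) atTop (𝓝 0)

theorem cauchyInMeasure_of_forall_exists_subseq {f : ℕ → α → E}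
    (h : ∀ l m : ℕ → ℕ, StrictMono l → StrictMono m → ∃ φ : ℕ → ℕ, StrictMono φ ∧
      ∀ ε > 0, Tendsto (fun k => μ {x | ε ≤ dist (f (l (φ k)) x) (f (m (φ k)) x)}) atTop (𝓝 0)) :
    CauchyInMeasure μ f := by
  intro ε hε
  by_contra hf
  rw [ENNReal.tendsto_nhds_zero] at hf
  push Not at hf
  obtain ⟨δ, hδ, hfreq⟩ := hf
  obtain ⟨p, hp, hpδ⟩ := exists_seq_forall_of_frequently hfreq
  rw [← prod_atTop_atTop_eq, tendsto_prod_iff'] at hp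
  obtain ⟨ψ₁, hψ₁, hl⟩ := strictMono_subseq_of_tendsto_atTop hp.1
  obtain ⟨ψ₂, hψ₂, hm⟩ := strictMono_subseq_of_tendsto_atTop (hp.2.comp hψ₁.tendsto_atTop)
  obtain ⟨φ, -, hφ⟩ := h _ _ (hl.comp hψ₂) hm
  have hlim := (hφ ε hε).eventually (gt_mem_nhds hδ)
  obtain ⟨k, hk⟩ := hlim.exists
  exact (hpδ (ψ₁ (ψ₂ (φ k)))).not_gt hk

theorem CauchyInMeasure.exists_strictMono_measure_dist_succ_le {f : ℕ → α → E}
    (hf : CauchyInMeasure μ f) :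
    ∃ n : ℕ → ℕ, StrictMono n ∧
      ∀ k, μ {x | (2⁻¹ : ℝ) ^ k ≤ dist (f (n (k + 1)) x) (f (n k) x)} ≤ 2⁻¹ ^ k := by
  have hsmall : ∀ k, ∀ᶠ N in atTop, ∀ i ≥ N, ∀ j ≥ N,
      μ {x | (2⁻¹ : ℝ) ^ k ≤ dist (f i x) (f j x)} ≤ 2⁻¹ ^ k := fun k => by
    obtain ⟨N, hN⟩ := eventually_atTop_prod_self'.mp <|
      (hf ((2⁻¹ : ℝ) ^ k) (by positivity)).eventually
        (ge_mem_nhds (ENNReal.pow_pos (a := 2⁻¹) (by norm_num) k))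
    exact eventually_atTop.mpr ⟨N, fun M hM i hi j hj => hN i (hM.trans hi) j (hM.trans hj)⟩
  obtain ⟨n, hn, hnk⟩ := extraction_forall_of_eventually hsmall
  exact ⟨n, hn, fun k => hnk k _ (hn (Nat.lt_succ_self k)).le _ le_rfl⟩

theorem ae_cauchySeq_of_measure_dist_succ_le {f : ℕ → α → E}
    (hf : ∀ k, μ {x | (2⁻¹ : ℝ) ^ k ≤ dist (f (k + 1) x) (f k x)} ≤ 2⁻¹ ^ k) :
    ∀ᵐ x ∂μ, CauchySeq fun k => f k x := by
  have hsum : ∑' k, μ {x | (2⁻¹ : ℝ) ^ k ≤ dist (f (k + 1) x) (f k x)} ≠ ⊤ := by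
    refine ne_top_of_le_ne_top ?_ (ENNReal.tsum_le_tsum hf)
    simp [ENNReal.tsum_geometric, ENNReal.one_sub_inv_two]
  filter_upwards [ae_eventually_notMem hsum] with x hx
  obtain ⟨K, hK⟩ := eventually_atTop.mp hx
  refine (cauchySeq_shift K).mp <| cauchySeq_of_le_geometric 2⁻¹ (2⁻¹ ^ K) (by norm_num) fun k => ?_
  have hk := hK (k + K) (Nat.le_add_left K k)
  simp only [not_le] at hk
  rw [dist_comm, ← pow_add, add_comm K, add_right_comm]
  exact hk.le

theorem CauchyInMeasure.tendstoInMeasure_of_subseq {f : ℕ → α → E} {g : α → E} {n : ℕ → ℕ}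
    (hf : CauchyInMeasure μ f) (hn : StrictMono n)
    (hg : TendstoInMeasure μ (fun k => f (n k)) atTop g) : TendstoInMeasure μ f atTop g := by
  rw [tendstoInMeasure_iff_dist] at hg ⊢
  intro ε hε
  have hpair : Tendsto (fun i => (i, n i)) atTop atTop := by
    rw [← prod_atTop_atTop_eq]
    exact tendsto_id.prodMk hn.tendsto_atTop
  have hsum := ((hf _ (half_pos hε)).comp hpair).add (hg _ (half_pos hε))
  rw [add_zero] at hsum
  refine tendsto_of_tendsto_of_tendsto_of_le_of_le tendsto_const_nhds hsum (fun _ => zero_le)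
    fun i => (measure_mono fun x hx => ?_).trans (measure_union_le _ _)
  by_contra hx'
  simp only [Set.mem_union, Set.mem_ofPred_eq, not_or, not_le] at hx hx'
  linarith [dist_triangle (f i x) (f (n i) x) (g x)]

theorem CauchyInMeasure.exists_tendstoInMeasure [CompleteSpace E] [SecondCountableTopology E]
    [MeasurableSpace E] [BorelSpace E] [IsFiniteMeasure μ] {f : ℕ → α → E}
    (hf : CauchyInMeasure μ f) (hmeas : ∀ n, AEMeasurable (f n) μ) :
    ∃ g : α → E, Measurable g ∧ TendstoInMeasure μ f atTop g := by
  obtain ⟨n, hn, hsucc⟩ := hf.exists_strictMono_measure_dist_succ_le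
  have hconv : ∀ᵐ x ∂μ, ∃ y, Tendsto (fun k => f (n k) x) atTop (𝓝 y) := by
    filter_upwards [ae_cauchySeq_of_measure_dist_succ_le (f := fun k => f (n k)) hsucc] with x hx
    exact cauchySeq_tendsto_of_complete hx
  obtain ⟨g, hg, hlim⟩ := measurable_limit_of_tendsto_metrizable_ae (fun k => hmeas (n k)) hconv
  exact ⟨g, hg, hf.tendstoInMeasure_of_subseq hn <|
    tendstoInMeasure_of_tendsto_ae (fun k => (hmeas (n k)).aestronglyMeasurable) hlim⟩

end CauchyInMeasure

end MeasureTheory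

/-- The Gyöngy–Krylov characterisation of convergence in probability in a Polish space:
`(X_n)` converges in probability to some random variable `X` if and only if every pair of
subsequences admits a further subsequence whose joint laws converge weakly to a probability
measure supported on the diagonal of `𝒴 × 𝒴`. -/
theorem gyongy_krylov {Ω Y : Type*} [MeasurableSpace Ω]
    [MetricSpace Y] [CompleteSpace Y] [TopologicalSpace.SeparableSpace Y]
    [MeasurableSpace Y] [BorelSpace Y]
    (μ : Measure Ω) [IsProbabilityMeasure μ]
    (X : ℕ → Ω → Y) (hX : ∀ n, Measurable (X n)) :
    (∃ Z : Ω → Y, Measurable Z ∧ TendstoInMeasure μ X atTop Z) ↔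
    (∀ l m : ℕ → ℕ, StrictMono l → StrictMono m →
      ∃ φ : ℕ → ℕ, StrictMono φ ∧
        ∃ ν : Measure (Y × Y), IsProbabilityMeasure ν ∧
          ν {p : Y × Y | p.1 ≠ p.2} = 0 ∧
          ∀ g : BoundedContinuousFunction (Y × Y) ℝ,
            Tendsto (fun k => ∫ ω, g (X (l (φ k)) ω, X (m (φ k)) ω) ∂μ) atTop
              (𝓝 (∫ p, g p ∂ν))) := by
  have : SecondCountableTopology Y := UniformSpace.secondCountable_of_separable Y
  constructor
  · rintro ⟨Z, hZ, hXZ⟩ l m hl hm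
    have hZZ : Measurable fun ω => (Z ω, Z ω) := hZ.prodMk hZ
    have hpair : TendstoInMeasure μ (fun k ω => (X (l k) ω, X (m k) ω)) atTop
        (fun ω => (Z ω, Z ω)) :=
      (hXZ.comp hl.tendsto_atTop).prodMk (hXZ.comp hm.tendsto_atTop)
    refine ⟨id, strictMono_id, μ.map fun ω => (Z ω, Z ω),
      Measure.isProbabilityMeasure_map hZZ.aemeasurable, ?_, fun g => ?_⟩
    · refine (Measure.map_apply hZZ
        (measurableSet_eq_fun measurable_fst measurable_snd).compl).trans ?_
      simp
    · rw [integral_map hZZ.aemeasurable g.continuous.aestronglyMeasurable]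
      exact (hpair.tendstoInDistribution fun k =>
        ((hX (l k)).prodMk (hX (m k))).aemeasurable).tendsto_integral g
  · intro h
    have hcauchy : CauchyInMeasure μ X := cauchyInMeasure_of_forall_exists_subseq
      fun l m hl hm => by
        obtain ⟨φ, hφ, ν, hν, hdiag, hconv⟩ := h l m hl hm
        refine ⟨φ, hφ, fun ε hε => tendsto_measure_preimage_of_tendsto_integral
          (fun k => ((hX (l (φ k))).prodMk (hX (m (φ k)))).aemeasurable) hconv
          (isClosed_le continuous_const continuous_dist) (measure_mono_null ?_ hdiag)⟩
        intro p hp hp_eq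
        simp only [Set.mem_ofPred_eq, hp_eq, dist_self] at hp
        linarith
    exact hcauchy.exists_tendstoInMeasure fun n => (hX n).aemeasurable
end
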